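/- arXiv:2502.02968 — 3 statements merged into one kernel-verified Lean document; each statement's English description precedes it below -/
import Mathlib

section
/- In the 2-LCCP model, the label of a coupon c can be deduced from a collection of samples if and only if c lies in a connected component of size at least 3 in the auxiliary graph H on the coupons, whose edges are the pairs of coupons sampled together. -/
/-!
A sample `{a, b}` reveals `{e a, e b}`, so a consistent labeling `f` either agrees with `e` on
both `a` and `b` or swaps their labels. Hence agreement with `e` propagates along paths of
`sampleGraph S`, and a coupon `a` with `f a ≠ e a` has `e⁻¹ (f a)` as its only neighbour. If
`f c ≠ e c`, every vertex of the component of `c` thus has degree at most one, so the component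
has at most two vertices. Conversely, an isolated `c` can be given a fresh label, and the two
coupons of a component `{c, d}` can exchange their labels.
-/

/-- The auxiliary coupon graph of the 2-LCCP model: two coupons are adjacent iff the
pair was sampled together. `S` is the set of sampled coupon pairs. -/
def sampleGraph {n : ℕ} (S : Set (Finset (Fin n))) : SimpleGraph (Fin n) where
  Adj a b := a ≠ b ∧ ({a, b} : Finset (Fin n)) ∈ S
  symm := by
    refine ⟨fun a b h => ?_⟩
    exact ⟨h.1.symm, by rw [Finset.pair_comm]; exact h.2⟩
  loopless := by refine ⟨fun a h => ?_⟩; exact h.1 rfl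

namespace SimpleGraph

variable {V : Type*} {G : SimpleGraph V} {c : V}

theorem connectedComponentMk_supp_subset_of_adj_closed {T : Set V} (hc : c ∈ T)
    (hT : ∀ u v, u ∈ T → G.Adj u v → v ∈ T) : (G.connectedComponentMk c).supp ⊆ T := by
  intro v hv
  replace hv := (reachable_iff_reflTransGen c v).mp (ConnectedComponent.exact hv).symm
  induction hv with
  | refl => exact hc
  | tail _ hadj ih => exact hT _ _ ih hadj

theorem ncard_supp_le_two_of_subsingleton_neighborSet
    (h : ∀ x, G.Reachable c x → (G.neighborSet x).Subsingleton) :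
    (G.connectedComponentMk c).supp.ncard ≤ 2 := by
  have hsupp : (G.connectedComponentMk c).supp ⊆ insert c (G.neighborSet c) := by
    refine connectedComponentMk_supp_subset_of_adj_closed (Set.mem_insert c _) ?_
    rintro u v (rfl | hcu) huv
    · exact Or.inr huv
    · exact Or.inl (h u hcu.reachable (G.mem_neighborSet u c |>.mpr hcu.symm) huv).symm
  have hfin := (h c .rfl).finite
  calc (G.connectedComponentMk c).supp.ncard
      ≤ (insert c (G.neighborSet c)).ncard := Set.ncard_le_ncard hsupp (hfin.insert c)
    _ ≤ (G.neighborSet c).ncard + 1 := Set.ncard_insert_le c _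
    _ ≤ 2 := by have := Set.ncard_le_one hfin |>.mpr (h c .rfl); omega

end SimpleGraph

section Relabeling

variable {V α : Type*} [DecidableEq α] {S : Set (Finset V)} {e : V → α} {c d : V}

theorem exists_relabeling_of_forall_notMem [Finite V] [Infinite α] (he : e.Injective)
    (hc : ∀ P ∈ S, c ∉ P) :
    ∃ f : V → α, f.Injective ∧ (∀ P ∈ S, P.image f = P.image e) ∧ f c ≠ e c := by
  classical
  obtain ⟨N, hN⟩ := (Set.finite_range e).infinite_compl.nonempty
  refine ⟨Function.update e c N, fun x y hxy => ?_, fun P hP => ?_, ?_⟩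
  · simp only [Set.mem_compl_iff, Set.mem_range, not_exists] at hN
    by_cases hx : x = c <;> by_cases hy : y = c <;>
      simp only [Function.update_apply, hx, hy, if_true, if_false] at hxy
    exacts [hx.trans hy.symm, (hN y hxy.symm).elim, (hN x hxy).elim, he hxy]
  · exact Finset.image_congr fun x hx =>
      Function.update_of_ne (by rintro rfl; exact hc P hP hx) _ _
  · simpa using fun h => hN ⟨c, h.symm⟩

theorem exists_relabeling_of_forall_eq_pair_or_disjoint [DecidableEq V] (he : e.Injective)
    (hcd : c ≠ d) (h : ∀ P ∈ S, P = {c, d} ∨ Disjoint P {c, d}) :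
    ∃ f : V → α, f.Injective ∧ (∀ P ∈ S, P.image f = P.image e) ∧ f c ≠ e c := by
  refine ⟨e ∘ Equiv.swap c d, he.comp (Equiv.injective _), fun P hP => ?_, ?_⟩
  · rw [← Finset.image_image]
    congr 1
    rcases h P hP with rfl | hdisj
    · simp [Finset.pair_comm]
    · have hfix : ∀ x ∈ P, Equiv.swap c d x = id x := fun x hx => by
        have : x ∉ ({c, d} : Finset V) := Finset.disjoint_left.mp hdisj hx
        simp only [Finset.mem_insert, Finset.mem_singleton, not_or] at this
        exact Equiv.swap_apply_of_ne_of_ne this.1 this.2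
      rw [Finset.image_congr hfix, Finset.image_id]
  · simpa using he.ne hcd.symm

end Relabeling

section SampleGraph

open SimpleGraph

variable {n : ℕ} {S : Set (Finset (Fin n))} {α : Type*} [DecidableEq α] {e f : Fin n → α}
  {a b c : Fin n}

theorem sampleGraph_reachable_of_mem (hS : ∀ P ∈ S, P.card = 2) {P : Finset (Fin n)}
    (hP : P ∈ S) (ha : a ∈ P) (hb : b ∈ P) : (sampleGraph S).Reachable a b := by
  obtain ⟨x, y, hxy, rfl⟩ := Finset.card_eq_two.mp (hS P hP)
  have hadj : (sampleGraph S).Adj x y := ⟨hxy, hP⟩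
  simp only [Finset.mem_insert, Finset.mem_singleton] at ha hb
  rcases ha with rfl | rfl <;> rcases hb with rfl | rfl
  exacts [.rfl, hadj.reachable, hadj.symm.reachable, .rfl]

theorem coe_eq_supp_of_mem_of_ncard_supp_le_two (hS : ∀ P ∈ S, P.card = 2)
    {K : (sampleGraph S).ConnectedComponent} (hK : K.supp.ncard ≤ 2) {P : Finset (Fin n)}
    (hP : P ∈ S) (ha : a ∈ P) (haK : a ∈ K.supp) : (P : Set (Fin n)) = K.supp := by
  refine Set.eq_of_subset_of_ncard_le (fun b hb => ?_) (by rwa [Set.ncard_coe_finset, hS P hP])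
  rw [ConnectedComponent.mem_supp_iff] at haK ⊢
  rw [← haK]
  exact ConnectedComponent.sound (sampleGraph_reachable_of_mem hS hP hb ha)

theorem exists_relabeling_of_ncard_supp_le_two [Infinite α] (he : e.Injective)
    (hS : ∀ P ∈ S, P.card = 2)
    (h2 : ((sampleGraph S).connectedComponentMk c).supp.ncard ≤ 2) :
    ∃ f : Fin n → α, f.Injective ∧ (∀ P ∈ S, P.image f = P.image e) ∧ f c ≠ e c := by
  by_cases hc : ∃ P ∈ S, c ∈ P
  · obtain ⟨P₀, hP₀, hcP₀⟩ := hc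
    have hP₀K := coe_eq_supp_of_mem_of_ncard_supp_le_two hS h2 hP₀ hcP₀ rfl
    obtain ⟨d, hdP₀, hdc⟩ := Finset.exists_mem_ne (by rw [hS P₀ hP₀]; norm_num) c
    have hP₀cd : P₀ = {c, d} := (Finset.eq_of_subset_of_card_le
      (Finset.insert_subset hcP₀ (Finset.singleton_subset_iff.mpr hdP₀))
      (by rw [hS P₀ hP₀, Finset.card_pair hdc.symm])).symm
    refine exists_relabeling_of_forall_eq_pair_or_disjoint he hdc.symm fun P hP => ?_
    rw [← hP₀cd, or_iff_not_imp_right, Finset.not_disjoint_iff]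
    rintro ⟨x, hxP, hxP₀⟩
    rw [← Finset.coe_inj, hP₀K]
    exact coe_eq_supp_of_mem_of_ncard_supp_le_two hS h2 hP hxP (hP₀K ▸ hxP₀)
  · push Not at hc
    exact exists_relabeling_of_forall_notMem he hc

theorem apply_eq_or_apply_eq_of_adj (himg : ∀ P ∈ S, P.image f = P.image e)
    (hab : (sampleGraph S).Adj a b) : f a = e a ∨ f a = e b := by
  have : f a ∈ ({a, b} : Finset (Fin n)).image e :=
    himg _ hab.2 ▸ Finset.mem_image_of_mem f (Finset.mem_insert_self a _)
  simpa using this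

theorem apply_eq_of_adj_of_apply_eq (hf : f.Injective) (himg : ∀ P ∈ S, P.image f = P.image e)
    (hab : (sampleGraph S).Adj a b) (ha : f a = e a) : f b = e b :=
  (apply_eq_or_apply_eq_of_adj himg hab.symm).resolve_right
    fun hb => hab.ne (hf (hb.trans ha.symm)).symm

theorem apply_eq_of_reachable_of_apply_eq (hf : f.Injective)
    (himg : ∀ P ∈ S, P.image f = P.image e) (hab : (sampleGraph S).Reachable a b)
    (ha : f a = e a) : f b = e b := by
  obtain ⟨w⟩ := hab
  induction w with
  | nil => exact ha
  | cons hadj _ ih => exact ih (apply_eq_of_adj_of_apply_eq hf himg hadj ha)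

theorem neighborSet_subsingleton_of_apply_ne (he : e.Injective)
    (himg : ∀ P ∈ S, P.image f = P.image e) (ha : f a ≠ e a) :
    ((sampleGraph S).neighborSet a).Subsingleton := fun _ hb _ hb' =>
  he (((apply_eq_or_apply_eq_of_adj himg hb).resolve_left ha).symm.trans
    ((apply_eq_or_apply_eq_of_adj himg hb').resolve_left ha))

theorem apply_eq_of_three_le_ncard_supp (he : e.Injective) (hf : f.Injective)
    (himg : ∀ P ∈ S, P.image f = P.image e)
    (h3 : 3 ≤ ((sampleGraph S).connectedComponentMk c).supp.ncard) : f c = e c := by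
  by_contra hc
  have := ncard_supp_le_two_of_subsingleton_neighborSet fun x hcx =>
    neighborSet_subsingleton_of_apply_ne he himg fun hx =>
      hc (apply_eq_of_reachable_of_apply_eq hf himg hcx.symm hx)
  omega

end SampleGraph

/-- In the 2-LCCP model (hidden injective labeling `e : Fin n → ℕ`, each sample
revealing a pair of coupons and the unordered set of their labels), the label of a
coupon `c` is deducible from the set `S` of sampled pairs iff `c` lies in a connected
component of size at least 3 of the auxiliary graph on the coupons. -/
theorem two_LCCP_deducible_iff_component_ge_three (n : ℕ) (e : Fin n → ℕ)
    (he : Function.Injective e) (S : Set (Finset (Fin n)))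
    (hS : ∀ P ∈ S, P.card = 2) (c : Fin n) :
    (∀ f : Fin n → ℕ, Function.Injective f →
        (∀ P ∈ S, P.image f = P.image e) → f c = e c)
      ↔ 3 ≤ ((sampleGraph S).connectedComponentMk c).supp.ncard := by
  refine ⟨fun hded => ?_, fun h3 f hf himg => apply_eq_of_three_le_ncard_supp he hf himg h3⟩
  by_contra! h2
  obtain ⟨f, hf, himg, hfc⟩ :=
    exists_relabeling_of_ncard_supp_le_two he hS (Nat.le_of_lt_succ h2)
  exact hfc (hded f hf himg)
end

section
/- For n ≥ 2 the expected number of samples to recover at least one coupon's label in the 2-LCCP model equals 1 + ∑_{i=1}^{⌊n/2⌋} (n!/((n−2i)!·2^i)) · ((m−i)!/m!), where m = (n−2)(n+1)/2, and this quantity is O(n). -/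
/-!
Before the first collision, the distinct pairs sampled so far form a matching. Let `c(t, k)` count
the length-`t` sequences of pairs whose distinct pairs form a matching with `k` edges. A new pair
keeps such a sequence collision-free iff it repeats one of its pairs or avoids all `2k` covered
coupons, so `c(t+1, k+1) = (k+1) c(t, k+1) + C(n-2k, 2) c(t, k)`. For the generating functions
`F_k(x) = ∑_t c(t, k) x^t` this reads `(1 - (k+1)x) F_{k+1}(x) = C(n-2k, 2) x F_k(x)`, hence
`F_k(1/C(n,2)) = ∏_{j<k} C(n-2j, 2) / (C(n,2) - j - 1)`, which is the `k`-th summand of the closed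
form. The factor `j = 0` is `C(n,2)/(C(n,2) - 1) ≤ 3/2` and all later factors are at most `1`, so
the sum is at most `1 + 3n/4`.
-/

open Finset
open scoped Nat

namespace TwoLCCP

section Matchings

abbrev Pair (α : Type*) := {P : Finset α // P.card = 2}

def IsMatching {α : Type*} {t : ℕ} (g : Fin t → Pair α) : Prop :=
  ∀ i j, (g i : Finset α) ≠ g j → Disjoint (g i : Finset α) (g j)

variable {α : Type*} {t : ℕ}

theorem isMatching_cons_iff (p : Pair α) (h : Fin t → Pair α) :
    IsMatching (Fin.cons p h : Fin (t + 1) → Pair α) ↔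
      IsMatching h ∧ ∀ i, (p : Finset α) ≠ h i → Disjoint (p : Finset α) (h i) := by
  refine ⟨fun hc => ⟨fun i j => hc i.succ j.succ, fun i => hc 0 i.succ⟩, ?_⟩
  rintro ⟨hh, hp⟩ i j
  cases i using Fin.cases <;> cases j using Fin.cases
  · simp
  · exact hp _
  · exact fun hij => (hp _ (Ne.symm hij)).symm
  · exact hh _ _

variable [DecidableEq α]

instance : DecidablePred (IsMatching : (Fin t → Pair α) → Prop) :=
  fun _ => inferInstanceAs (Decidable (∀ _ _, _))

def support (g : Fin t → Pair α) : Finset α := univ.biUnion fun i => (g i : Finset α)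

theorem image_cons (p : Pair α) (h : Fin t → Pair α) :
    univ.image (Fin.cons p h : Fin (t + 1) → Pair α) = insert p (univ.image h) := by
  ext
  simp [Fin.exists_fin_succ, eq_comm]

theorem card_support_of_isMatching {g : Fin t → Pair α} (hg : IsMatching g) :
    #(support g) = 2 * #(univ.image g) := by
  rw [support, ← image_biUnion, card_biUnion, sum_congr rfl fun P _ => P.prop, sum_const,
    smul_eq_mul, mul_comm]
  intro P hP Q hQ hPQ
  obtain ⟨i, -, rfl⟩ := mem_image.1 hP
  obtain ⟨j, -, rfl⟩ := mem_image.1 hQ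
  exact hg i j fun h => hPQ (Subtype.ext h)

theorem isMatching_cons_iff_of_isMatching {h : Fin t → Pair α} (hh : IsMatching h)
    (p : Pair α) :
    IsMatching (Fin.cons p h : Fin (t + 1) → Pair α) ↔
      p ∈ univ.image h ∨ Disjoint (p : Finset α) (support h) := by
  simp only [isMatching_cons_iff, hh, true_and, support, disjoint_biUnion_right, mem_univ,
    true_imp_iff, mem_image]
  constructor
  · intro hp
    by_contra! hno
    obtain ⟨i, hi⟩ := hno.2
    exact hi (hp i fun e => hno.1 i (Subtype.ext e.symm))
  · rintro (⟨i₀, rfl⟩ | hp) i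
    · exact hh i₀ i
    · exact fun _ => hp i

theorem not_disjoint_support_of_mem_image {h : Fin t → Pair α} {p : Pair α}
    (hp : p ∈ univ.image h) : ¬Disjoint (p : Finset α) (support h) := by
  obtain ⟨i, -, rfl⟩ := mem_image.1 hp
  intro hd
  have hsub : (h i : Finset α) ⊆ support h :=
    subset_biUnion_of_mem (fun i => (h i : Finset α)) (mem_univ i)
  have := (disjoint_self_iff_empty _).1 (hd.mono_right hsub)
  simpa [this] using (h i).prop

variable [Fintype α]

variable (α) in
def matchingCount (t k : ℕ) : ℕ :=
  #{g : Fin t → Pair α | IsMatching g ∧ #(univ.image g) = k}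

theorem two_mul_card_image_le {g : Fin t → Pair α} (hg : IsMatching g) :
    2 * #(univ.image g) ≤ Fintype.card α :=
  card_support_of_isMatching hg ▸ card_le_univ _

theorem card_filter_disjoint (s : Finset α) :
    #{p : Pair α | Disjoint (p : Finset α) s} = (Fintype.card α - #s).choose 2 := by
  rw [← card_compl, ← card_powersetCard]
  refine card_bij (fun p _ => p.1) (fun p hp => ?_) (fun p _ q _ => Subtype.ext) fun P hP => ?_
  · simpa [mem_powersetCard, subset_compl_iff_disjoint_right, p.prop] using hp
  · obtain ⟨hPs, hP2⟩ := mem_powersetCard.1 hP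
    exact ⟨⟨P, hP2⟩, by simpa [subset_compl_iff_disjoint_right] using hPs, rfl⟩

theorem card_filter_cons (h : Fin t → Pair α) (k : ℕ) :
    #{p | IsMatching (Fin.cons p h : Fin (t + 1) → Pair α) ∧
        #(univ.image (Fin.cons p h : Fin (t + 1) → Pair α)) = k + 1} =
      (if IsMatching h ∧ #(univ.image h) = k + 1 then k + 1 else 0) +
      (if IsMatching h ∧ #(univ.image h) = k then (Fintype.card α - 2 * k).choose 2 else 0) := by
  by_cases hh : IsMatching h
  swap
  · simp only [hh, false_and, if_false, add_zero, card_eq_zero, filter_eq_empty_iff]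
    exact fun p _ hp => hh ((isMatching_cons_iff p h).1 hp.1).1
  simp only [hh, true_and, isMatching_cons_iff_of_isMatching hh, image_cons, card_insert_eq_ite]
  rcases eq_or_ne #(univ.image h) (k + 1) with hk | hk
  · rw [if_pos hk, if_neg (by omega), add_zero, ← hk]
    congr 1
    ext p
    by_cases hp : p ∈ univ.image h
    · simp only [mem_filter, mem_univ, true_and, hp, if_true, true_or, hk]
    · simp only [mem_filter, mem_univ, true_and, hp, if_false, hk, false_or, iff_false]
      omega
  rcases eq_or_ne #(univ.image h) k with hk' | hk'
  · have hcount : (Fintype.card α - 2 * k).choose 2 =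
        #{p : Pair α | Disjoint (p : Finset α) (support h)} := by
      rw [card_filter_disjoint, card_support_of_isMatching hh, hk']
    rw [if_neg hk, if_pos hk', zero_add, hcount]
    congr 1
    ext p
    by_cases hp : p ∈ univ.image h
    · simp only [mem_filter, mem_univ, hp, if_true, not_disjoint_support_of_mem_image hp, hk,
        and_false]
    · simp only [mem_filter, mem_univ, true_and, hp, if_false, hk', false_or, and_true]
  · rw [if_neg hk, if_neg hk', add_zero, card_eq_zero, filter_eq_empty_iff]
    intro p _
    split_ifs <;> omega

theorem matchingCount_succ_succ (t k : ℕ) :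
    matchingCount α (t + 1) (k + 1) =
      (k + 1) * matchingCount α t (k + 1) +
        (Fintype.card α - 2 * k).choose 2 * matchingCount α t k := by
  have hsplit : matchingCount α (t + 1) (k + 1) = ∑ h : Fin t → Pair α,
      #{p | IsMatching (Fin.cons p h : Fin (t + 1) → Pair α) ∧
        #(univ.image (Fin.cons p h : Fin (t + 1) → Pair α)) = k + 1} := by
    simp only [matchingCount, card_filter]
    rw [← (Fin.consEquiv fun _ => Pair α).sum_comp, Fintype.sum_prod_type_right]
    rfl
  rw [hsplit]
  simp only [card_filter_cons, sum_add_distrib, sum_ite, sum_const_zero, add_zero,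
    sum_const, smul_eq_mul, matchingCount]
  ring

theorem matchingCount_zero_right (t : ℕ) : matchingCount α t 0 = if t = 0 then 1 else 0 := by
  rcases t with _ | t
  · simp [matchingCount, IsMatching]
  · simp [matchingCount, univ_eq_empty_iff]

theorem matchingCount_zero_succ (k : ℕ) : matchingCount α 0 (k + 1) = 0 := by
  simp [matchingCount]

theorem matchingCount_le (t k : ℕ) :
    matchingCount α t k ≤ (Fintype.card α).choose 2 ^ k * (k + 1) ^ t := by
  induction t generalizing k with
  | zero => cases k <;> simp [matchingCount_zero_right, matchingCount_zero_succ]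
  | succ t ih =>
    cases k with
    | zero => simp [matchingCount_zero_right]
    | succ k =>
      have hC : (Fintype.card α - 2 * k).choose 2 ≤ (Fintype.card α).choose 2 :=
        Nat.choose_le_choose 2 (Nat.sub_le _ _)
      calc matchingCount α (t + 1) (k + 1)
          ≤ (k + 1) * ((Fintype.card α).choose 2 ^ (k + 1) * (k + 2) ^ t) +
              (Fintype.card α).choose 2 * ((Fintype.card α).choose 2 ^ k * (k + 1) ^ t) := by
            rw [matchingCount_succ_succ]
            gcongr
            exacts [ih _, ih _]
        _ ≤ (k + 1) * ((Fintype.card α).choose 2 ^ (k + 1) * (k + 2) ^ t) +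
              (Fintype.card α).choose 2 ^ (k + 1) * (k + 2) ^ t := by
            rw [← mul_assoc ((Fintype.card α).choose 2), ← pow_succ']
            gcongr
            omega
        _ = (Fintype.card α).choose 2 ^ (k + 1) * (k + 1 + 1) ^ (t + 1) := by ring

theorem card_isMatching_eq_sum (t : ℕ) :
    Nat.card {g : Fin t → Pair α // IsMatching g} =
      ∑ k ∈ range (Fintype.card α / 2 + 1), matchingCount α t k := by
  rw [Nat.card_eq_fintype_card, Fintype.card_subtype,
    card_eq_sum_card_fiberwise (f := fun g => #(univ.image g))
      (t := range (Fintype.card α / 2 + 1)) fun g hg => ?_]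
  · simp only [matchingCount, filter_filter]
  · have := two_mul_card_image_le (mem_filter.1 hg).2
    simp only [coe_range, Set.mem_Iio]
    omega

variable (α) in
noncomputable def matchingGF (k : ℕ) (x : ℝ) : ℝ :=
  ∑' t, (matchingCount α t k : ℝ) * x ^ t

theorem summable_matchingCount_mul_pow {k : ℕ} {x : ℝ} (hx : 0 ≤ x) (hkx : (k + 1) * x < 1) :
    Summable fun t => (matchingCount α t k : ℝ) * x ^ t := by
  refine Summable.of_nonneg_of_le (fun t => by positivity) (fun t => ?_)
    ((summable_geometric_of_lt_one (by positivity) hkx).mul_left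
      (((Fintype.card α).choose 2 : ℝ) ^ k))
  rw [mul_pow, ← mul_assoc]
  gcongr
  exact_mod_cast matchingCount_le t k

theorem matchingGF_zero (x : ℝ) : matchingGF α 0 x = 1 := by
  rw [matchingGF, tsum_eq_single 0 fun t ht => by simp [matchingCount_zero_right, ht]]
  simp [matchingCount_zero_right]

theorem matchingGF_succ {k : ℕ} {x : ℝ} (hx : 0 ≤ x) (hkx : (k + 2) * x < 1) :
    (1 - (k + 1) * x) * matchingGF α (k + 1) x =
      (Fintype.card α - 2 * k).choose 2 * x * matchingGF α k x := by
  have hs₁ := summable_matchingCount_mul_pow (α := α) (k := k + 1) hx (by push_cast; linarith)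
  have hs₀ := summable_matchingCount_mul_pow (α := α) (k := k) hx (by linarith)
  have hshift : matchingGF α (k + 1) x =
      ∑' t, (matchingCount α (t + 1) (k + 1) : ℝ) * x ^ (t + 1) := by
    rw [matchingGF, hs₁.tsum_eq_zero_add, matchingCount_zero_succ, Nat.cast_zero, zero_mul,
      zero_add]
  have hrec : matchingGF α (k + 1) x = (k + 1) * x * matchingGF α (k + 1) x +
      (Fintype.card α - 2 * k).choose 2 * x * matchingGF α k x := by
    nth_rewrite 1 [hshift]
    unfold matchingGF
    rw [← tsum_mul_left, ← tsum_mul_left, ← (hs₁.mul_left _).tsum_add (hs₀.mul_left _)]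
    refine tsum_congr fun t => ?_
    rw [matchingCount_succ_succ]
    push_cast
    ring
  linarith

theorem matchingGF_eq_prod {k : ℕ} {x : ℝ} (hx : 0 ≤ x) (hkx : (k + 1) * x < 1) :
    matchingGF α k x =
      ∏ j ∈ range k, (Fintype.card α - 2 * j).choose 2 * x / (1 - (j + 1) * x) := by
  induction k with
  | zero => simp [matchingGF_zero (α := α)]
  | succ k ih =>
    push_cast at hkx
    have hpos : 0 < 1 - (k + 1) * x := by linarith
    rw [prod_range_succ, ← ih (by linarith), mul_div_assoc', eq_div_iff hpos.ne', mul_comm,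
      matchingGF_succ hx (by linarith), mul_comm]

end Matchings

section Sojourn

theorem self_le_choose_two {n : ℕ} (hn : 3 ≤ n) : n ≤ n.choose 2 := by
  obtain ⟨r, rfl⟩ := Nat.exists_eq_add_of_le' hn
  rw [Nat.choose_succ_succ', Nat.choose_one_right]
  have := Nat.choose_pos (n := r + 2) (k := 1 + 1) (by omega)
  omega

theorem sub_two_mul_add_one_div_two (n : ℕ) : (n - 2) * (n + 1) / 2 = n.choose 2 - 1 := by
  rw [Nat.choose_two_right]
  rcases lt_or_ge n 2 with h | h
  · interval_cases n <;> rfl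
  · obtain ⟨r, rfl⟩ := Nat.exists_eq_add_of_le' h
    have e : (r + 2) * (r + 2 - 1) = r * (r + 3) + 1 * 2 := by
      rw [Nat.add_sub_assoc (by omega)]
      ring
    rw [e, Nat.add_mul_div_right _ _ two_pos, Nat.add_sub_cancel, Nat.add_sub_cancel]

theorem choose_two_sub_two_mul_lt {n i : ℕ} (hi : 1 ≤ i) (hin : 2 * i + 2 ≤ n) :
    ((n - 2 * i).choose 2 : ℝ) < n.choose 2 - (i + 1) := by
  rw [Nat.cast_choose_two, Nat.cast_choose_two, Nat.cast_sub (by omega)]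
  have hi' : (1 : ℝ) ≤ i := by exact_mod_cast hi
  have hin' : 2 * (i : ℝ) + 2 ≤ n := by exact_mod_cast hin
  push_cast
  nlinarith

theorem prod_choose_two_mul_factorial {n k : ℕ} (hk : 2 * k ≤ n) :
    (∏ j ∈ range k, (n - 2 * j).choose 2) * 2 ^ k * (n - 2 * k)! = n ! := by
  induction k with
  | zero => simp
  | succ k ih =>
    have e : n - 2 * k = n - 2 * (k + 1) + 2 := by omega
    rw [← ih (by omega), prod_range_succ, e,
      ← Nat.choose_mul_factorial_mul_factorial (Nat.le_add_left 2 _), Nat.add_sub_cancel]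
    ring

/-- The expected number of times `t < T(1)` at which the first `t` samples contain exactly `k`
distinct pairs. -/
noncomputable def sojourn (n k : ℕ) : ℝ :=
  ∏ j ∈ range k, ((n - 2 * j).choose 2 : ℝ) / (n.choose 2 - (j + 1))

theorem sojourn_eq_factorial {n k : ℕ} (hk : 2 * k ≤ n) (hkN : k < n.choose 2) :
    sojourn n k =
      n ! / ((n - 2 * k)! * 2 ^ k) * ((n.choose 2 - 1 - k)! / (n.choose 2 - 1)!) := by
  set m := n.choose 2 - 1
  have hden : ∏ j ∈ range k, ((n.choose 2 : ℝ) - (j + 1)) = (m.descFactorial k : ℝ) := by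
    rw [Nat.descFactorial_eq_prod_range, Nat.cast_prod]
    refine prod_congr rfl fun j hj => ?_
    have := mem_range.1 hj
    rw [Nat.cast_sub (by omega), Nat.cast_sub (by omega)]
    push_cast
    ring
  have hm : (m.descFactorial k : ℝ) ≠ 0 :=
    Nat.cast_ne_zero.2 fun h => by rw [Nat.descFactorial_eq_zero_iff_lt] at h; omega
  rw [sojourn, prod_div_distrib, hden, ← prod_choose_two_mul_factorial hk,
    ← Nat.factorial_mul_descFactorial (n := m) (k := k) (by omega)]
  push_cast
  field_simp

theorem sojourn_le {n k : ℕ} (hn : 3 ≤ n) (hk : k ≤ n / 2) : sojourn n k ≤ 3 / 2 := by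
  rcases k with _ | k
  · norm_num [sojourn]
  have hN : (3 : ℝ) ≤ n.choose 2 := by exact_mod_cast hn.trans (self_le_choose_two hn)
  have hfirst : ((n - 2 * 0).choose 2 : ℝ) / (n.choose 2 - ((0 : ℕ) + 1)) ≤ 3 / 2 := by
    rw [mul_zero, Nat.sub_zero, Nat.cast_zero, zero_add, div_le_iff₀ (by linarith)]
    linarith
  have hlt : ∀ j ∈ range k,
      ((n - 2 * (j + 1)).choose 2 : ℝ) < n.choose 2 - ((j + 1 : ℕ) + 1) := fun j hj =>
    choose_two_sub_two_mul_lt (by omega) (by have := mem_range.1 hj; omega)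
  have hrest : ∏ j ∈ range k,
      ((n - 2 * (j + 1)).choose 2 : ℝ) / (n.choose 2 - ((j + 1 : ℕ) + 1)) ≤ 1 := by
    refine prod_le_one (fun j hj => ?_) fun j hj => ?_
    · exact div_nonneg (Nat.cast_nonneg _) ((Nat.cast_nonneg _).trans_lt (hlt j hj)).le
    · exact (div_le_one ((Nat.cast_nonneg _).trans_lt (hlt j hj))).2 (hlt j hj).le
  rw [sojourn, prod_range_succ']
  exact (mul_le_of_le_one_left (div_nonneg (Nat.cast_nonneg _) (by push_cast; linarith))
    hrest).trans hfirst

end Sojourn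

variable {α : Type*} [Fintype α] [DecidableEq α]

theorem matchingGF_inv_choose_two {k : ℕ} (hk : k + 1 < (Fintype.card α).choose 2) :
    matchingGF α k ((Fintype.card α).choose 2 : ℝ)⁻¹ = sojourn (Fintype.card α) k := by
  have hk' : ((k : ℝ) + 1) < (Fintype.card α).choose 2 := by exact_mod_cast hk
  rw [matchingGF_eq_prod (by positivity)
    (by rw [← div_eq_mul_inv, div_lt_one (by linarith)]; exact hk'), sojourn]
  refine prod_congr rfl fun j hj => ?_
  have hj : (j : ℝ) + 1 < (Fintype.card α).choose 2 := by
    have := mem_range.1 hj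
    exact_mod_cast (show j + 1 < (Fintype.card α).choose 2 by omega)
  have : ((Fintype.card α).choose 2 : ℝ) - (j + 1) ≠ 0 := by linarith
  have : ((Fintype.card α).choose 2 : ℝ) ≠ 0 := by linarith
  field_simp

theorem tsum_card_isMatching_div (h : Fintype.card α / 2 + 1 < (Fintype.card α).choose 2) :
    ∑' t, (Nat.card {g : Fin t → Pair α // IsMatching g} : ℝ) /
        ((Fintype.card α).choose 2 : ℝ) ^ t =
      ∑ k ∈ range (Fintype.card α / 2 + 1), sojourn (Fintype.card α) k := by
  have hN : (0 : ℝ) < (Fintype.card α).choose 2 := by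
    exact_mod_cast (Nat.zero_lt_succ _).trans h
  have hlt : ∀ k ∈ range (Fintype.card α / 2 + 1), k + 1 < (Fintype.card α).choose 2 :=
    fun k hk => by have := mem_range.1 hk; omega
  simp_rw [card_isMatching_eq_sum, Nat.cast_sum, sum_div, div_eq_mul_inv, ← inv_pow]
  rw [Summable.tsum_finsetSum fun k hk => summable_matchingCount_mul_pow (by positivity) ?_]
  · exact sum_congr rfl fun k hk => matchingGF_inv_choose_two (hlt k hk)
  · rw [← div_eq_mul_inv, div_lt_one hN]
    exact_mod_cast hlt k hk

end TwoLCCP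

/-- The expectation is written as the sum of the tail probabilities
`P(T(1) > t) = #{pair-sequences forming a partial matching}/C(n,2)^t`. -/
theorem two_LCCP_expected_first_recovery :
    ∃ C : ℝ, ∀ n : ℕ, 3 ≤ n →
      (∑' t : ℕ,
          (Nat.card {g : Fin t → {P : Finset (Fin n) // P.card = 2} //
              ∀ i j : Fin t, (g i : Finset (Fin n)) ≠ (g j : Finset (Fin n)) →
                Disjoint (g i : Finset (Fin n)) (g j : Finset (Fin n))} : ℝ)
            / (n.choose 2 : ℝ) ^ t
        = 1 + ∑ i ∈ Finset.Icc 1 (n / 2),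
            ((n.factorial : ℝ) / (((n - 2 * i).factorial : ℝ) * 2 ^ i))
              * ((((n - 2) * (n + 1) / 2 - i).factorial : ℝ)
                  / (((n - 2) * (n + 1) / 2).factorial : ℝ))) ∧
      (1 + ∑ i ∈ Finset.Icc 1 (n / 2),
            ((n.factorial : ℝ) / (((n - 2 * i).factorial : ℝ) * 2 ^ i))
              * ((((n - 2) * (n + 1) / 2 - i).factorial : ℝ)
                  / (((n - 2) * (n + 1) / 2).factorial : ℝ)))
        ≤ C * n := by
  refine ⟨2, fun n hn => ?_⟩
  have hN : n / 2 + 1 < n.choose 2 := by have := TwoLCCP.self_le_choose_two hn; omega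
  have hterms : ∀ i ∈ Icc 1 (n / 2),
      ((n.factorial : ℝ) / (((n - 2 * i).factorial : ℝ) * 2 ^ i))
        * ((((n - 2) * (n + 1) / 2 - i).factorial : ℝ)
          / (((n - 2) * (n + 1) / 2).factorial : ℝ)) = TwoLCCP.sojourn n i := fun i hi => by
    have := (mem_Icc.1 hi).2
    rw [TwoLCCP.sub_two_mul_add_one_div_two, TwoLCCP.sojourn_eq_factorial (by omega) (by omega)]
  rw [sum_congr rfl hterms]
  refine ⟨?_, ?_⟩
  · have hexp := TwoLCCP.tsum_card_isMatching_div (α := Fin n) (by simpa using hN)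
    rw [Fintype.card_fin] at hexp
    refine hexp.trans ?_
    rw [range_eq_Ico, Ico_add_one_right_eq_Icc, ← insert_Icc_add_one_left_eq_Icc (Nat.zero_le _),
      sum_insert (by simp), TwoLCCP.sojourn, prod_range_zero, zero_add]
  · have hsum := sum_le_card_nsmul (Icc 1 (n / 2)) (TwoLCCP.sojourn n) (3 / 2) fun i hi =>
      TwoLCCP.sojourn_le hn (mem_Icc.1 hi).2
    rw [Nat.card_Icc, Nat.add_sub_cancel, nsmul_eq_mul] at hsum
    have : ((n / 2 : ℕ) : ℝ) ≤ n / 2 := Nat.cast_div_le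
    have : (3 : ℝ) ≤ n := by exact_mod_cast hn
    linarith
end

section
/- For integers n ≥ 3 and any p ∈ [0,1], the minimal number of samples for complete recovery in the K(p)-LCCP model equals ⌈2n/3⌉, the same as in the pure 2-LCCP model. -/
/-- A sequence of sampled coupon subsets determines the hidden injective labeling `e`
if `e` is the only injective labeling consistent with the revealed unordered label
sets of all samples. -/
def DeterminesLCCP {n : ℕ} (e : Fin n → ℕ) {t : ℕ} (g : Fin t → Finset (Fin n)) : Prop :=
  ∀ f : Fin n → ℕ, Function.Injective f →
    (∀ i : Fin t, (g i).image f = (g i).image e) → f = e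

namespace KpAux

/-- left endpoint of the `k`-th sample -/
def A (k : ℕ) : ℕ := 3 * (k / 2) + k % 2

/-- the optimal sampling scheme -/
def G (n : ℕ) (k : Fin ((2 * n + 2) / 3)) : Finset (Fin n) :=
  Finset.univ.filter (fun v : Fin n => v.val = A k.val ∨ v.val = A k.val + 1)

lemma mem_G {n : ℕ} {k : Fin ((2 * n + 2) / 3)} {x : Fin n} :
    x ∈ G n k ↔ (x.val = A k.val ∨ x.val = A k.val + 1) := by
  simp [G]

lemma A_lt {n : ℕ} (k : Fin ((2 * n + 2) / 3)) : A k.val < n := by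
  have := k.isLt
  unfold A
  omega

lemma card_G {n : ℕ} (k : Fin ((2 * n + 2) / 3)) : (G n k).card = 1 ∨ (G n k).card = 2 := by
  by_cases h : A k.val + 1 < n
  · right
    have hG : G n k = {⟨A k.val, A_lt k⟩, ⟨A k.val + 1, h⟩} := by
      ext x
      simp [mem_G, Fin.ext_iff]
    rw [hG, Finset.card_insert_of_notMem (by simp [Fin.ext_iff]), Finset.card_singleton]
  · left
    have hG : G n k = {⟨A k.val, A_lt k⟩} := by
      ext x
      have := x.isLt
      simp only [mem_G, Finset.mem_singleton, Fin.ext_iff]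
      omega
    rw [hG, Finset.card_singleton]

lemma determines {n : ℕ} (_hn : 3 ≤ n) (e : Fin n → ℕ) (he : Function.Injective e) :
    DeterminesLCCP e (G n) := by
  intro f hf H
  have key : ∀ (k : Fin ((2 * n + 2) / 3)) (x : Fin n), x ∈ G n k →
      ∃ y ∈ G n k, e y = f x := by
    intro k x hx
    have h1 : f x ∈ (G n k).image e := by
      rw [← H k]; exact Finset.mem_image_of_mem f hx
    simpa [Finset.mem_image] using h1
  have mid : ∀ v : Fin n, v.val % 3 = 1 → f v = e v := by
    intro v hv
    set q := v.val / 3 with hq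
    have hv3 : v.val = 3 * q + 1 := by omega
    have hvlt := v.isLt
    have hk1 : 2 * q < (2 * n + 2) / 3 := by omega
    have hk2 : 2 * q + 1 < (2 * n + 2) / 3 := by omega
    have hA1 : A (2 * q) = 3 * q := by unfold A; omega
    have hA2 : A (2 * q + 1) = 3 * q + 1 := by unfold A; omega
    have hvk1 : v ∈ G (n := n) ⟨2 * q, hk1⟩ := mem_G.mpr (by rw [hA1]; omega)
    have hvk2 : v ∈ G (n := n) ⟨2 * q + 1, hk2⟩ := mem_G.mpr (by rw [hA2]; omega)
    obtain ⟨y1, hy1, hey1⟩ := key _ _ hvk1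
    obtain ⟨y2, hy2, hey2⟩ := key _ _ hvk2
    rw [mem_G] at hy1 hy2
    rw [hA1] at hy1
    rw [hA2] at hy2
    rcases hy1 with h1 | h1
    · rcases hy2 with h2 | h2
      · have hvy : y2 = v := Fin.ext (by omega)
        rw [hvy] at hey2; exact hey2.symm
      · exfalso
        have : y1 = y2 := he (by rw [hey1, hey2])
        have := congrArg Fin.val this
        omega
    · have hvy : y1 = v := Fin.ext (by omega)
      rw [hvy] at hey1; exact hey1.symm
  funext v
  have hr : v.val % 3 = 0 ∨ v.val % 3 = 1 ∨ v.val % 3 = 2 := by omega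
  set q := v.val / 3 with hq
  have hvlt := v.isLt
  rcases hr with hr | hr | hr
  · -- v.val = 3q
    have hv3 : v.val = 3 * q := by omega
    have hk1 : 2 * q < (2 * n + 2) / 3 := by omega
    have hA1 : A (2 * q) = 3 * q := by unfold A; omega
    have hvk1 : v ∈ G (n := n) ⟨2 * q, hk1⟩ := mem_G.mpr (by rw [hA1]; omega)
    obtain ⟨y, hy, hey⟩ := key _ _ hvk1
    rw [mem_G] at hy
    rw [hA1] at hy
    rcases hy with hy | hy
    · have hvy : y = v := Fin.ext (by omega)
      rw [hvy] at hey; exact hey.symm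
    · exfalso
      have hylt := y.isLt
      have hym : y.val % 3 = 1 := by omega
      have hfy : f y = e y := mid y hym
      have : v = y := hf (by rw [hfy, ← hey])
      have := congrArg Fin.val this
      omega
  · exact mid v hr
  · -- v.val = 3q+2
    have hv3 : v.val = 3 * q + 2 := by omega
    have hk2 : 2 * q + 1 < (2 * n + 2) / 3 := by omega
    have hA2 : A (2 * q + 1) = 3 * q + 1 := by unfold A; omega
    have hvk2 : v ∈ G (n := n) ⟨2 * q + 1, hk2⟩ := mem_G.mpr (by rw [hA2]; omega)
    obtain ⟨y, hy, hey⟩ := key _ _ hvk2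
    rw [mem_G] at hy
    rw [hA2] at hy
    rcases hy with hy | hy
    · exfalso
      have hym : y.val % 3 = 1 := by omega
      have hfy : f y = e y := mid y hym
      have : v = y := hf (by rw [hfy, ← hey])
      have := congrArg Fin.val this
      omega
    · have hvy : y = v := Fin.ext (by omega)
      rw [hvy] at hey; exact hey.symm

lemma lower_bound {n t : ℕ} (_hn : 3 ≤ n) (e : Fin n → ℕ) (he : Function.Injective e)
    (g : Fin t → Finset (Fin n)) (hc : ∀ i, (g i).card = 1 ∨ (g i).card = 2)
    (hd : DeterminesLCCP e g) : 2 * n ≤ 3 * t := by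
  classical
  set d : Fin n → ℕ := fun v => (Finset.univ.filter (fun i => v ∈ g i)).card with hdrf
  -- every vertex is covered
  have hd1 : ∀ v, 1 ≤ d v := by
    intro v
    by_contra hv
    have hv0 : ∀ i, v ∉ g i := by
      intro i hi
      exact hv (Finset.card_pos.mpr ⟨i, by simp [hi]⟩)
    set N : ℕ := (Finset.univ.sup e) + 1 with hN
    have hNe : ∀ x, e x < N := fun x =>
      Nat.lt_succ_of_le (Finset.le_sup (Finset.mem_univ x))
    set f : Fin n → ℕ := fun x => if x = v then N else e x with hfdef
    have hfi : Function.Injective f := by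
      intro a b hab
      by_cases ha : a = v <;> by_cases hb : b = v <;>
        simp only [f, ha, hb, if_pos, if_neg, if_true] at hab <;>
        first
          | (subst ha; subst hb; rfl)
          | (exfalso; simp [ha, hb] at hab; first
              | exact absurd hab.symm (Nat.ne_of_lt (hNe _)).symm
              | exact absurd hab (Nat.ne_of_lt (hNe _)).symm)
          | exact he hab
    have himg : ∀ i, (g i).image f = (g i).image e := by
      intro i
      apply Finset.image_congr
      intro x hx
      have : x ≠ v := by rintro rfl; exact hv0 i hx
      simp [f, this]
    have : f = e := hd f hfi himg
    have := congrFun this v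
    simp [f] at this
    exact absurd this.symm (Nat.ne_of_lt (hNe v))
  -- no sample has both members of degree 1
  have swap_claim : ∀ (i : Fin t) (a b : Fin n), a ≠ b → a ∈ g i → b ∈ g i →
      d a = 1 → d b = 1 → False := by
    intro i a b hab ha hb hda hdb
    have hunique : ∀ (x : Fin n), d x = 1 → x ∈ g i → ∀ j, x ∈ g j → j = i := by
      intro x hx hxi j hxj
      by_contra hji
      have h2 : ({j, i} : Finset (Fin t)) ⊆ Finset.univ.filter (fun i => x ∈ g i) := by
        intro k hk
        simp only [Finset.mem_insert, Finset.mem_singleton] at hk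
        rcases hk with rfl | rfl <;> simp [hxj, hxi]
      have := Finset.card_le_card h2
      rw [Finset.card_insert_of_notMem (by simp [hji]), Finset.card_singleton] at this
      simp only [hdrf] at hx
      omega
    -- g i = {a, b}
    have hgi : g i = {a, b} := by
      apply (Finset.eq_of_subset_of_card_le ?_ ?_).symm
      · intro x hx
        simp only [Finset.mem_insert, Finset.mem_singleton] at hx
        rcases hx with rfl | rfl <;> assumption
      · rcases hc i with h | h <;>
          rw [Finset.card_insert_of_notMem (by simp [hab]), Finset.card_singleton] <;>
          omega
    set f : Fin n → ℕ := e ∘ Equiv.swap a b with hfdef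
    have hfi : Function.Injective f := he.comp (Equiv.injective _)
    have himg : ∀ j, (g j).image f = (g j).image e := by
      intro j
      by_cases hji : j = i
      · subst hji
        rw [hgi, Finset.image_insert, Finset.image_insert, Finset.image_singleton,
          Finset.image_singleton]
        simp only [hfdef, Function.comp_apply, Equiv.swap_apply_left, Equiv.swap_apply_right]
        exact Finset.pair_comm _ _
      · apply Finset.image_congr
        intro x hx
        have hxa : x ≠ a := by rintro rfl; exact hji (hunique x hda ha j hx)
        have hxb : x ≠ b := by rintro rfl; exact hji (hunique x hdb hb j hx)
        simp [f, Equiv.swap_apply_of_ne_of_ne hxa hxb]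
    have : f = e := hd f hfi himg
    have := congrFun this a
    simp [f, Equiv.swap_apply_left] at this
    exact hab (he this).symm
  -- degree-1 vertices inject into samples
  set L : Finset (Fin n) := Finset.univ.filter (fun v => d v = 1) with hLdef
  have hF : ∀ v : Fin n, (Finset.univ.filter (fun i => v ∈ g i)).Nonempty := by
    intro v
    rw [← Finset.card_pos]
    have := hd1 v
    simp only [hdrf] at this
    omega
  set F : Fin n → Fin t := fun v => (Finset.univ.filter (fun i => v ∈ g i)).min' (hF v)
    with hFdef
  have hFmem : ∀ v, v ∈ g (F v) := by
    intro v
    have := Finset.min'_mem _ (hF v)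
    simpa using this
  have hLcard : L.card ≤ t := by
    have : L.card ≤ (Finset.univ : Finset (Fin t)).card := by
      apply Finset.card_le_card_of_injOn F (fun a _ => Finset.mem_univ _)
      intro u hu v hv huv
      by_contra huvne
      simp only [hLdef, Finset.coe_filter, Set.mem_setOf_eq] at hu hv
      exact swap_claim (F v) u v huvne (huv ▸ hFmem u) (hFmem v) hu.2 hv.2
    simpa using this
  -- double counting
  have hsum : ∑ v : Fin n, d v = ∑ i : Fin t, (g i).card := by
    simp only [hdrf, Finset.card_filter]
    rw [Finset.sum_comm]
    congr 1
    funext i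
    rw [Finset.sum_ite_mem, Finset.univ_inter, Finset.card_eq_sum_ones]
  have hsum_le : ∑ i : Fin t, (g i).card ≤ 2 * t := by
    calc ∑ i : Fin t, (g i).card ≤ ∑ _i : Fin t, 2 :=
          Finset.sum_le_sum (fun i _ => by rcases hc i with h | h <;> omega)
      _ = 2 * t := by simp [mul_comm]
  have hLsum : L.card = ∑ v : Fin n, (if d v = 1 then 1 else 0) := by
    rw [hLdef, Finset.card_filter]
  have hlow : 2 * n ≤ ∑ v : Fin n, d v + L.card := by
    rw [hLsum, ← Finset.sum_add_distrib]
    calc 2 * n = ∑ _v : Fin n, 2 := by simp [mul_comm]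
      _ ≤ ∑ v : Fin n, (d v + if d v = 1 then 1 else 0) := by
          apply Finset.sum_le_sum
          intro v _
          have := hd1 v
          split_ifs <;> omega
  omega

end KpAux

/-- In the `K(p)`-LCCP model with `n ≥ 3` coupons (samples of size 1 reveal a coupon
with its label, samples of size 2 reveal a pair of coupons with the unordered set of
their labels), the minimal number of samples in a sequence of size-1 and size-2
samples achieving complete recovery is `⌈2n/3⌉` (written `(2*n+2)/3` in natural
division) — the same as in the pure 2-LCCP model. -/
theorem Kp_LCCP_min_samples (n : ℕ) (hn : 3 ≤ n) (e : Fin n → ℕ)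
    (he : Function.Injective e) :
    IsLeast {t : ℕ | ∃ g : Fin t → Finset (Fin n),
        (∀ i, (g i).card = 1 ∨ (g i).card = 2) ∧ DeterminesLCCP e g}
      ((2 * n + 2) / 3) := by
  constructor
  · exact ⟨KpAux.G n, KpAux.card_G, KpAux.determines hn e he⟩
  · rintro t ⟨g, hc, hd⟩
    have := KpAux.lower_bound hn e he g hc hd
    omega
end
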